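/- For s, t ≥ 2, the set F = {(1,1), (s,1), (1,t), (s,t)} of the four corners is a frame for the (s × t)-grid: every endomorphism h of G_{s,t} whose image contains F is surjective. -/

import Mathlib

/-- Vertices of the `(s × t)`-grid: pairs `(i, j)` with `i ∈ [s]`, `j ∈ [t]`. -/
def GridV (s t : ℕ) : Type :=
  {p : ℕ × ℕ // 1 ≤ p.1 ∧ p.1 ≤ s ∧ 1 ≤ p.2 ∧ p.2 ≤ t}

/-- The `(s × t)`-grid graph: `(i,j)` and `(i',j')` are adjacent iff
`|i - i'| + |j - j'| = 1`. -/
def gridGraph (s t : ℕ) : SimpleGraph (GridV s t) :=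
  SimpleGraph.fromRel (fun p q =>
    ((p.1.1 : ℤ) - q.1.1).natAbs + ((p.1.2 : ℤ) - q.1.2).natAbs = 1)

/-!
A grid homomorphism is 1-Lipschitz for the L1 distance, since L1 distance is the graph distance.
The diameter `s + t - 2` is attained only by pairs of opposite corners, and for such a pair
`a, d` every vertex `v` has `|v - a| + |v - d| = s + t - 2`. So if `h a = (1,1)` and
`h d = (s,t)`, then `a, d` are opposite corners and both Lipschitz bounds
`|h v - h a| ≤ |v - a|`, `|h v - h d| ≤ |v - d|` are equalities. Doing the same for the preimages
`b, c` of `(s,1), (1,t)`, `h` preserves distances to the two distinct, non-opposite corners `a, b`;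
these distances determine a vertex, so `h` is injective, hence surjective.
-/

section

variable {s t : ℕ}

@[ext]
lemma GridV.ext {u v : GridV s t} (h₁ : u.1.1 = v.1.1) (h₂ : u.1.2 = v.1.2) : u = v :=
  Subtype.ext (Prod.ext h₁ h₂)

instance GridV.finite : Finite (GridV s t) :=
  ((Set.finite_Icc ((1, 1) : ℕ × ℕ) (s, t)).subset
    fun _ hp => ⟨⟨hp.1, hp.2.2.1⟩, hp.2.1, hp.2.2.2⟩).to_subtype

def gridDist (u v : GridV s t) : ℕ :=
  ((u.1.1 : ℤ) - v.1.1).natAbs + ((u.1.2 : ℤ) - v.1.2).natAbs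

def GridV.IsCorner (a : GridV s t) : Prop :=
  (a.1.1 = 1 ∨ a.1.1 = s) ∧ (a.1.2 = 1 ∨ a.1.2 = t)

def GridV.Opposite (a d : GridV s t) : Prop :=
  gridDist a d = s + t - 2

lemma gridDist_comm (u v : GridV s t) : gridDist u v = gridDist v u := by
  unfold gridDist; omega

lemma gridDist_triangle (u v w : GridV s t) : gridDist u w ≤ gridDist u v + gridDist v w := by
  unfold gridDist; omega

lemma gridDist_le (u v : GridV s t) : gridDist u v ≤ s + t - 2 := by
  have := u.2; have := v.2; unfold gridDist; omega

lemma gridGraph_adj_iff {u v : GridV s t} : (gridGraph s t).Adj u v ↔ gridDist u v = 1 := by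
  rw [gridGraph, SimpleGraph.fromRel_adj]
  refine ⟨fun ⟨_, h⟩ => h.elim id fun h => by rwa [gridDist_comm], fun h => ⟨?_, .inl h⟩⟩
  rintro rfl
  simp [gridDist] at h

lemma exists_gridGraph_adj_gridDist_eq {u v : GridV s t} (huv : u ≠ v) :
    ∃ w, (gridGraph s t).Adj u w ∧ gridDist w v + 1 = gridDist u v := by
  simp only [gridGraph_adj_iff]
  obtain ⟨⟨x, y⟩, hu⟩ := u
  obtain ⟨⟨x', y'⟩, hv⟩ := v
  dsimp only at hu hv
  rcases lt_trichotomy x x' with hx | rfl | hx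
  · exact ⟨⟨(x + 1, y), by omega⟩, by simp only [gridDist]; omega⟩
  · have hy : y ≠ y' := fun hy => huv (by subst hy; rfl)
    rcases hy.lt_or_gt with hy | hy
    · exact ⟨⟨(x, y + 1), by omega⟩, by simp only [gridDist]; omega⟩
    · exact ⟨⟨(x, y - 1), by omega⟩, by simp only [gridDist]; omega⟩
  · exact ⟨⟨(x - 1, y), by omega⟩, by simp only [gridDist]; omega⟩

lemma gridDist_map_le {s' t' : ℕ} (h : gridGraph s t →g gridGraph s' t') (u v : GridV s t) :
    gridDist (h u) (h v) ≤ gridDist u v := by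
  induction hn : gridDist u v using Nat.strong_induction_on generalizing u with
  | _ n ih =>
  obtain rfl | huv := eq_or_ne u v
  · simp [gridDist]
  obtain ⟨w, huw, hwv⟩ := exists_gridGraph_adj_gridDist_eq huv
  calc gridDist (h u) (h v) ≤ gridDist (h u) (h w) + gridDist (h w) (h v) :=
        gridDist_triangle _ _ _
    _ ≤ 1 + gridDist w v := by
        rw [gridGraph_adj_iff.mp (h.map_adj huw)]
        exact Nat.add_le_add_left (ih _ (by omega) w rfl) 1
    _ = n := by omega

lemma GridV.Opposite.isCorner {a d : GridV s t} (had : a.Opposite d) : a.IsCorner := by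
  have := a.2; have := d.2; unfold Opposite gridDist at had; unfold IsCorner; omega

lemma GridV.Opposite.gridDist_add_gridDist {a d : GridV s t} (had : a.Opposite d)
    (v : GridV s t) : gridDist v a + gridDist v d = s + t - 2 := by
  have := a.2; have := d.2; have := v.2; unfold Opposite at had; unfold gridDist at had ⊢; omega

lemma GridV.Opposite.of_map (h : gridGraph s t →g gridGraph s t) {a d : GridV s t}
    (had : (h a).Opposite (h d)) : a.Opposite d :=
  le_antisymm (gridDist_le a d) (had ▸ gridDist_map_le h a d)

lemma GridV.Opposite.gridDist_map_eq (h : gridGraph s t →g gridGraph s t) {a d : GridV s t}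
    (had : (h a).Opposite (h d)) (v : GridV s t) : gridDist (h v) (h a) = gridDist v a := by
  have := had.gridDist_add_gridDist (h v)
  have := (of_map h had).gridDist_add_gridDist v
  have := gridDist_map_le h v a
  have := gridDist_map_le h v d
  omega

lemma GridV.eq_of_gridDist_eq_of_isCorner {a b u v : GridV s t} (ha : a.IsCorner)
    (hb : b.IsCorner) (hab₀ : 0 < gridDist a b) (hab : gridDist a b < s + t - 2)
    (hua : gridDist u a = gridDist v a) (hub : gridDist u b = gridDist v b) : u = v := by
  have := u.2; have := v.2
  obtain ⟨ha₁ | ha₁, ha₂ | ha₂⟩ := ha <;> obtain ⟨hb₁ | hb₁, hb₂ | hb₂⟩ := hb <;>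
    unfold gridDist at * <;> ext <;> omega

end

/-- The four corners form a frame for the `(s × t)`-grid (`s, t ≥ 2`): every
endomorphism whose image contains the four corners is surjective. -/
theorem grid_corners_frame (s t : ℕ) (hs : 2 ≤ s) (ht : 2 ≤ t)
    (h : gridGraph s t →g gridGraph s t)
    (hF : ({⟨(1, 1), by omega⟩, ⟨(s, 1), by omega⟩, ⟨(1, t), by omega⟩,
            ⟨(s, t), by omega⟩} : Set (GridV s t)) ⊆ Set.range h) :
    Function.Surjective h := by
  obtain ⟨a, ha⟩ := hF (Set.mem_insert _ _)
  obtain ⟨b, hb⟩ := hF (Set.mem_insert_of_mem _ (Set.mem_insert _ _))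
  obtain ⟨c, hc⟩ := hF (Set.mem_insert_of_mem _ (Set.mem_insert_of_mem _ (Set.mem_insert _ _)))
  obtain ⟨d, hd⟩ := hF (Set.mem_insert_of_mem _ (Set.mem_insert_of_mem _
    (Set.mem_insert_of_mem _ rfl)))
  have had : (h a).Opposite (h d) := by rw [ha, hd]; simp [GridV.Opposite, gridDist]; omega
  have hbc : (h b).Opposite (h c) := by rw [hb, hc]; simp [GridV.Opposite, gridDist]; omega
  have hda := had.gridDist_map_eq h
  have hdb := hbc.gridDist_map_eq h
  have hab : gridDist a b = s - 1 := by
    rw [gridDist_comm, ← hda, ha, hb]; simp [gridDist]; omega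
  refine Finite.injective_iff_surjective.mp fun u v huv => ?_
  exact GridV.eq_of_gridDist_eq_of_isCorner (GridV.Opposite.of_map h had).isCorner
    (GridV.Opposite.of_map h hbc).isCorner (by omega) (by omega)
    (by rw [← hda, huv, hda]) (by rw [← hdb, huv, hdb])
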